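/- Let V be the real span of the rotation field and its scaled versions: the vector fields on ℝ²\{0} given in polar coordinates by ∂ₜ, cos t·∂ₜ, sin t·∂ₜ, (4cos²t+1)·∂ₜ, (4sin²t+1)·∂ₜ, cos t sin t·∂ₜ. The Lie algebra generated by V under [f,g] = fg' − f'g is dense in the space of all smooth vector fields on S¹ with respect to uniform convergence of all derivatives (equivalently, it contains all trigonometric polynomial vector fields). -/

import Mathlib

/-!
Write `Cₐ = cos (a t)` and `Sₐ = sin (a t)`. Product-to-sum formulas give
`[sin, Cₐ] = ((a - 1) / 2) Cₐ₊₁ - ((a + 1) / 2) Cₐ₋₁` and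
`[cos, Cₐ] = ((1 - a) / 2) Sₐ₊₁ - ((a + 1) / 2) Sₐ₋₁`,
so for `a ≠ 1` bracketing with `sin` and `cos` raises the frequency from `{a - 1, a}` to `a + 1`.
The generators supply frequencies `0`, `1` and `2` (through `4 cos² t - 4 sin² t = 4 cos 2t`
and `2 cos t sin t = sin 2t`), and induction then reaches every `n`.
-/

open Real VectorField

lemma VectorField.lieBracket_eq_deriv {𝕜 : Type*} [NontriviallyNormedField 𝕜] (f g : 𝕜 → 𝕜) :
    lieBracket 𝕜 f g = fun t => f t * deriv g t - deriv f t * g t := by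
  funext t
  simp only [lieBracket_eq, fderiv_eq_smul_deriv, smul_eq_mul]
  ring

lemma deriv_cos_const_mul (a : ℝ) :
    deriv (fun t => cos (a * t)) = fun t => -(a * sin (a * t)) := by
  funext t
  rw [(((hasDerivAt_id' t).const_mul a).cos).deriv]
  ring

lemma lieBracket_sin_cos_const_mul (a : ℝ) :
    lieBracket ℝ sin (fun t => cos (a * t)) =
      ((a - 1) / 2) • (fun t => cos ((a + 1) * t))
        - ((a + 1) / 2) • (fun t => cos ((a - 1) * t)) := by
  funext t
  simp only [lieBracket_eq_deriv, deriv_cos_const_mul, Real.deriv_sin, Pi.sub_apply,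
    Pi.smul_apply, smul_eq_mul, add_mul, sub_mul, one_mul, cos_add, cos_sub]
  ring

lemma lieBracket_cos_cos_const_mul (a : ℝ) :
    lieBracket ℝ cos (fun t => cos (a * t)) =
      ((1 - a) / 2) • (fun t => sin ((a + 1) * t))
        - ((a + 1) / 2) • (fun t => sin ((a - 1) * t)) := by
  funext t
  simp only [lieBracket_eq_deriv, deriv_cos_const_mul, Real.deriv_cos, Pi.sub_apply,
    Pi.smul_apply, smul_eq_mul, add_mul, sub_mul, one_mul, sin_add, sin_sub]
  ring

def ContainsFrequency (W : Submodule ℝ (ℝ → ℝ)) (a : ℝ) : Prop :=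
  (fun t => cos (a * t)) ∈ W ∧ (fun t => sin (a * t)) ∈ W

section

variable {W : Submodule ℝ (ℝ → ℝ)} (hW : ∀ f ∈ W, ∀ g ∈ W, lieBracket ℝ f g ∈ W)
  (hcos : cos ∈ W) (hsin : sin ∈ W)
include hW hcos hsin

lemma ContainsFrequency.add_one {a : ℝ} (ha : a ≠ 1) (hprev : ContainsFrequency W (a - 1))
    (hcos_a : (fun t => cos (a * t)) ∈ W) : ContainsFrequency W (a + 1) := by
  have ha₁ : (a - 1) / 2 ≠ 0 := div_ne_zero (sub_ne_zero.mpr ha) two_ne_zero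
  have ha₂ : (1 - a) / 2 ≠ 0 := div_ne_zero (sub_ne_zero.mpr ha.symm) two_ne_zero
  constructor
  · rw [← W.smul_mem_iff ha₁, ← sub_add_cancel (_ • _) (((a + 1) / 2) • _),
      ← lieBracket_sin_cos_const_mul]
    exact W.add_mem (hW _ hsin _ hcos_a) (W.smul_mem _ hprev.1)
  · rw [← W.smul_mem_iff ha₂, ← sub_add_cancel (_ • _) (((a + 1) / 2) • _),
      ← lieBracket_cos_cos_const_mul]
    exact W.add_mem (hW _ hcos _ hcos_a) (W.smul_mem _ hprev.2)

lemma containsFrequency_nat_add_one (h₁ : ContainsFrequency W 1)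
    (h₂ : ContainsFrequency W 2) (n : ℕ) : ContainsFrequency W (n + 1) := by
  suffices ∀ n : ℕ, ContainsFrequency W (n + 1) ∧ ContainsFrequency W (n + 1 + 1) from (this n).1
  intro n
  induction n with
  | zero => simpa [one_add_one_eq_two] using ⟨h₁, h₂⟩
  | succ n ih =>
    have ha : (n : ℝ) + 1 + 1 ≠ 1 := by linarith [n.cast_nonneg (α := ℝ)]
    have hprev : ContainsFrequency W ((n + 1 + 1 : ℝ) - 1) := by
      rw [add_sub_cancel_right]
      exact ih.1
    push_cast
    exact ⟨ih.2, ContainsFrequency.add_one hW hcos hsin ha hprev ih.2.1⟩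

end

/-- The Lie algebra of vector fields on the circle generated by
`∂ₜ, cos t·∂ₜ, sin t·∂ₜ, (4cos²t+1)·∂ₜ, (4sin²t+1)·∂ₜ, cos t sin t·∂ₜ`
contains every trigonometric polynomial vector field `cos(nt)·∂ₜ`, `sin(nt)·∂ₜ`
(and hence is dense in the smooth vector fields on `S¹`). -/
theorem stmt_16 (W : Submodule ℝ (ℝ → ℝ))
    (hbr : ∀ f ∈ W, ∀ g ∈ W, (fun t : ℝ => f t * deriv g t - deriv f t * g t) ∈ W)
    (h1 : (fun _ : ℝ => (1 : ℝ)) ∈ W)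
    (hc : (fun t : ℝ => Real.cos t) ∈ W)
    (hs : (fun t : ℝ => Real.sin t) ∈ W)
    (hc2 : (fun t : ℝ => 4 * Real.cos t ^ 2 + 1) ∈ W)
    (hs2 : (fun t : ℝ => 4 * Real.sin t ^ 2 + 1) ∈ W)
    (hcs : (fun t : ℝ => Real.cos t * Real.sin t) ∈ W) :
    ∀ n : ℕ, (fun t : ℝ => Real.cos (n * t)) ∈ W ∧ (fun t : ℝ => Real.sin (n * t)) ∈ W := by
  have hW : ∀ f ∈ W, ∀ g ∈ W, lieBracket ℝ f g ∈ W := by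
    simpa only [lieBracket_eq_deriv] using hbr
  have h₁ : ContainsFrequency W 1 := by simpa [ContainsFrequency] using ⟨hc, hs⟩
  have h₂ : ContainsFrequency W 2 := by
    have hcos₂ : (fun t : ℝ => cos (2 * t)) = (1 / 4 : ℝ) • ((fun t => 4 * cos t ^ 2 + 1) -
        fun t => 4 * sin t ^ 2 + 1) := by
      funext t
      simp only [Pi.smul_apply, Pi.sub_apply, smul_eq_mul, cos_two_mul, cos_sq']
      ring
    have hsin₂ : (fun t : ℝ => sin (2 * t)) = (2 : ℝ) • fun t => cos t * sin t := by
      funext t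
      simp only [Pi.smul_apply, smul_eq_mul, sin_two_mul]
      ring
    rw [ContainsFrequency, hcos₂, hsin₂]
    exact ⟨W.smul_mem _ (W.sub_mem hc2 hs2), W.smul_mem _ hcs⟩
  rintro (_ | n)
  · simpa using ⟨h1, W.zero_mem⟩
  · exact_mod_cast containsFrequency_nat_add_one hW hc hs h₁ h₂ n
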